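/- Suppose every element of sl_n(ℂ) can be written as a sum of 4 square-zero matrices in sl_n(ℂ). Let U ≤ sl_n(ℂ) be a subspace, and suppose there exist r₁, …, r_d ∈ sl_n(ℂ) with sl_n(ℂ) = U + [r₁, U] + ⋯ + [r_d, U]. Then there exist g₁, …, g_{8d} ∈ SL_n(ℂ) such that sl_n(ℂ) = U + ∑_{i=1}^{8d} gᵢ U gᵢ⁻¹. In particular the SL_n(ℂ)-additive conjugation diameter of sl_n(ℂ) with respect to U is at most 8d + 1. -/

import Mathlib

/-!
For a square-zero matrix `x`, the matrices `1 ± x` lie in `SL_n(ℂ)` with inverses `1 ∓ x`, and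
`(1 + x) u (1 - x) - (1 - x) u (1 + x) = 2 [x, u]`. Hence `[x, U]` lies in the sum of two
conjugates of `U`. Writing each `rᵢ` as a sum of four square-zero traceless matrices, `[rᵢ, U]`
lies in the sum of `8` conjugates of `U`, so `8d` conjugates together with `U` span `sl_n(ℂ)`;
conversely, conjugation preserves the trace, so they span nothing more.
-/

/-- The Lie algebra `sl_n(ℂ)` of traceless matrices. -/
noncomputable def sln (n : ℕ) : Submodule ℂ (Matrix (Fin n) (Fin n) ℂ) :=
  LinearMap.ker (Matrix.traceLinearMap (Fin n) ℂ ℂ)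

/-- Conjugation by `g ∈ SL_n(ℂ)` as a linear map `x ↦ g x g⁻¹`. -/
noncomputable def slConj {n : ℕ} (g : Matrix.SpecialLinearGroup (Fin n) ℂ) :
    Matrix (Fin n) (Fin n) ℂ →ₗ[ℂ] Matrix (Fin n) (Fin n) ℂ where
  toFun x := (g : Matrix (Fin n) (Fin n) ℂ) * x * ((g⁻¹ : Matrix.SpecialLinearGroup (Fin n) ℂ) : Matrix (Fin n) (Fin n) ℂ)
  map_add' x y := by simp [Matrix.mul_add, Matrix.add_mul]
  map_smul' c x := by simp [Matrix.mul_smul, Matrix.smul_mul]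

/-- The adjoint operator `ad r : u ↦ [r, u] = ru − ur`. -/
noncomputable def adOp {n : ℕ} (r : Matrix (Fin n) (Fin n) ℂ) :
    Matrix (Fin n) (Fin n) ℂ →ₗ[ℂ] Matrix (Fin n) (Fin n) ℂ :=
  LinearMap.mulLeft ℂ r - LinearMap.mulRight ℂ r

open Matrix

open Polynomial in
theorem Matrix.det_one_add_of_isNilpotent {n R : Type*} [Fintype n] [DecidableEq n] [CommRing R]
    [IsDomain R] {M : Matrix n n R} (hM : IsNilpotent M) : det (1 + M) = 1 := by
  -- `det (1 - X • M)` is a unit of `R[X]`, hence the constant `1`; evaluate it at `X = -1`.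
  obtain ⟨c, -, hc⟩ := Polynomial.isUnit_iff.mp (isUnit_charpolyRev_of_isNilpotent hM)
  have hrev : M.charpolyRev = 1 := by
    have h0 := M.eval_charpolyRev
    rw [← hc, eval_C] at h0
    rw [← hc, h0, C_1]
  have := congr_arg (eval (-1)) hrev
  rw [charpolyRev, ← coe_evalRingHom, RingHom.map_det, RingHom.mapMatrix_apply] at this
  simpa [Matrix.map_sub, Matrix.map_smul', Function.comp_def] using this

namespace Matrix.SpecialLinearGroup

variable {n R : Type*} [Fintype n] [DecidableEq n] [CommRing R] [IsDomain R]

noncomputable def oneAddOfSqZero (x : Matrix n n R) (hx : x ^ 2 = 0) : SpecialLinearGroup n R :=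
  ⟨1 + x, det_one_add_of_isNilpotent ⟨2, hx⟩⟩

@[simp]
theorem coe_oneAddOfSqZero (x : Matrix n n R) (hx : x ^ 2 = 0) :
    (oneAddOfSqZero x hx : Matrix n n R) = 1 + x :=
  rfl

@[simp]
theorem coe_inv_oneAddOfSqZero (x : Matrix n n R) (hx : x ^ 2 = 0) :
    ((oneAddOfSqZero x hx)⁻¹ : SpecialLinearGroup n R) = (1 - x : Matrix n n R) := by
  refine (left_inv_eq_right_inv (a := (oneAddOfSqZero x hx : Matrix n n R)) ?_ ?_).symm
  · rw [coe_oneAddOfSqZero, ← (Commute.one_left x).mul_self_sub_mul_self_eq', mul_one, ← sq, hx,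
      sub_zero]
  · rw [← coe_mul, mul_inv_cancel, coe_one]

end Matrix.SpecialLinearGroup

open Matrix.SpecialLinearGroup

section

variable {n : ℕ}

theorem slConj_apply (g : SpecialLinearGroup (Fin n) ℂ) (u : Matrix (Fin n) (Fin n) ℂ) :
    slConj g u = (g : Matrix (Fin n) (Fin n) ℂ) * u * (g⁻¹ : SpecialLinearGroup (Fin n) ℂ) :=
  rfl

theorem trace_slConj (g : SpecialLinearGroup (Fin n) ℂ) (u : Matrix (Fin n) (Fin n) ℂ) :
    (slConj g u).trace = u.trace := by
  rw [slConj_apply, trace_mul_cycle, ← coe_mul, inv_mul_cancel, coe_one, one_mul]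

theorem map_slConj_le_sln {U : Submodule ℂ (Matrix (Fin n) (Fin n) ℂ)} (hU : U ≤ sln n)
    (g : SpecialLinearGroup (Fin n) ℂ) : U.map (slConj g) ≤ sln n := by
  rintro _ ⟨u, hu, rfl⟩
  change (traceLinearMap (Fin n) ℂ ℂ) (slConj g u) = 0
  rw [traceLinearMap_apply, trace_slConj]
  exact hU hu

theorem slConj_oneAddOfSqZero {x : Matrix (Fin n) (Fin n) ℂ} (hx : x ^ 2 = 0)
    (u : Matrix (Fin n) (Fin n) ℂ) : slConj (oneAddOfSqZero x hx) u = (1 + x) * u * (1 - x) := by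
  rw [slConj_apply, coe_oneAddOfSqZero, coe_inv_oneAddOfSqZero]

theorem two_smul_adOp_eq_sub_slConj {x : Matrix (Fin n) (Fin n) ℂ} (hx : x ^ 2 = 0)
    (u : Matrix (Fin n) (Fin n) ℂ) :
    (2 : ℂ) • adOp x u = slConj (oneAddOfSqZero x hx) u -
      slConj (oneAddOfSqZero (-x) ((neg_sq x).trans hx)) u := by
  rw [slConj_oneAddOfSqZero, slConj_oneAddOfSqZero, two_smul]
  change (x * u - u * x) + (x * u - u * x) = _
  noncomm_ring

theorem map_adOp_le_sup_map_slConj (U : Submodule ℂ (Matrix (Fin n) (Fin n) ℂ))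
    {x : Matrix (Fin n) (Fin n) ℂ} (hx : x ^ 2 = 0) :
    U.map (adOp x) ≤ U.map (slConj (oneAddOfSqZero x hx)) ⊔
      U.map (slConj (oneAddOfSqZero (-x) ((neg_sq x).trans hx))) := by
  rintro _ ⟨u, hu, rfl⟩
  rw [← inv_smul_smul₀ (two_ne_zero (α := ℂ)) (adOp x u), two_smul_adOp_eq_sub_slConj hx u]
  exact Submodule.smul_mem _ _ (Submodule.sub_mem _
    (Submodule.mem_sup_left (Submodule.mem_map_of_mem hu))
    (Submodule.mem_sup_right (Submodule.mem_map_of_mem hu)))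

theorem map_adOp_sum_le {ι : Type*} [Fintype ι] (U : Submodule ℂ (Matrix (Fin n) (Fin n) ℂ))
    (a : ι → Matrix (Fin n) (Fin n) ℂ) : U.map (adOp (∑ j, a j)) ≤ ⨆ j, U.map (adOp (a j)) := by
  rintro _ ⟨u, hu, rfl⟩
  have h : adOp (∑ j, a j) u = ∑ j, adOp (a j) u := by
    simp only [adOp, LinearMap.sub_apply, LinearMap.mulLeft_apply, LinearMap.mulRight_apply,
      Finset.sum_mul, Finset.mul_sum, Finset.sum_sub_distrib]
  rw [h]
  exact Submodule.sum_mem _ fun j _ => Submodule.mem_iSup_of_mem j (Submodule.mem_map_of_mem hu)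

theorem exists_map_adOp_sum_le {ι : Type*} [Fintype ι] (U : Submodule ℂ (Matrix (Fin n) (Fin n) ℂ))
    (a : ι → Matrix (Fin n) (Fin n) ℂ) (ha : ∀ j, a j ^ 2 = 0) :
    ∃ g : ι × Bool → SpecialLinearGroup (Fin n) ℂ,
      U.map (adOp (∑ j, a j)) ≤ ⨆ p, U.map (slConj (g p)) := by
  refine ⟨fun p => if p.2 then oneAddOfSqZero (a p.1) (ha p.1)
    else oneAddOfSqZero (-a p.1) ((neg_sq _).trans (ha p.1)), ?_⟩
  refine (map_adOp_sum_le U a).trans <| iSup_le fun j =>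
    (map_adOp_le_sup_map_slConj U (ha j)).trans (sup_le ?_ ?_)
  · exact le_iSup_of_le (j, true) le_rfl
  · exact le_iSup_of_le (j, false) le_rfl

end

theorem stmt_18 (n d : ℕ)
    (hsq4 : ∀ z : Matrix (Fin n) (Fin n) ℂ, z.trace = 0 →
      ∃ a : Fin 4 → Matrix (Fin n) (Fin n) ℂ,
        (∀ i, a i ^ 2 = 0 ∧ (a i).trace = 0) ∧ z = ∑ i, a i)
    (U : Submodule ℂ (Matrix (Fin n) (Fin n) ℂ)) (hU : U ≤ sln n)
    (r : Fin d → Matrix (Fin n) (Fin n) ℂ) (hr : ∀ i, (r i).trace = 0)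
    (hcov : U ⊔ (⨆ i, Submodule.map (adOp (r i)) U) = sln n) :
    ∃ g : Fin (8 * d) → Matrix.SpecialLinearGroup (Fin n) ℂ,
      U ⊔ (⨆ i, Submodule.map (slConj (g i)) U) = sln n := by
  choose a ha hsum using fun i => hsq4 (r i) (hr i)
  choose h hh using fun i => exists_map_adOp_sum_le U (a i) fun j => (ha i j).1
  let e : Fin (8 * d) ≃ Fin d × Fin 4 × Bool := Fintype.equivOfCardEq (by simp [mul_comm])
  refine ⟨fun k => h (e k).1 (e k).2,
    le_antisymm (sup_le hU (iSup_le fun k => map_slConj_le_sln hU _)) ?_⟩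
  calc sln n = U ⊔ ⨆ i, U.map (adOp (r i)) := hcov.symm
    _ ≤ _ := sup_le_sup_left (iSup_le fun i => ?_) U
  rw [hsum i]
  refine (hh i).trans (iSup_le fun p => le_iSup_of_le (e.symm (i, p)) ?_)
  simp
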